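/- arXiv:2003.06726 — 3 statements merged into one kernel-verified Lean document; each statement's English description precedes it below -/
import Mathlib

section
/- Let λ₀, s₀ : ℤ → ℝ, fix n ≥ 1 and an integer x₀. Assume λ_{n−1}(x) ≠ 0 and λ_n(x) ≠ 0 for all x ∈ ℤ, and assume the terminating condition s_n(x)λ_{n−1}(x) = s_{n−1}(x)λ_n(x) holds for all x ∈ ℤ. Then the function y defined on integers x ≥ x₀ by y(x) = ∏_{i=x₀}^{x−1} (1 − s_{n−1}(i)/λ_{n−1}(i)) satisfies (Δ²y)(x) = λ₀(x)(Δy)(x) + s₀(x)y(x) for every integer x ≥ x₀. -/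
/-- Forward difference operator on functions `ℤ → ℝ`: `(Δ f)(x) = f(x+1) - f(x)`. -/
noncomputable def fd (f : ℤ → ℝ) : ℤ → ℝ := fun x => f (x + 1) - f x

/-- The DAIM sequences `(λ_n, s_n)` built from `(λ₀, s₀)`. -/
noncomputable def daim (l0 s0 : ℤ → ℝ) : ℕ → (ℤ → ℝ) × (ℤ → ℝ)
  | 0 => (l0, s0)
  | n + 1 =>
      (fun x => fd (daim l0 s0 n).1 x + (daim l0 s0 n).1 (x + 1) * l0 x
          + (daim l0 s0 n).2 (x + 1),
       fun x => fd (daim l0 s0 n).2 x + (daim l0 s0 n).1 (x + 1) * s0 x)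

/-!
Put `r = s_{n-1} / λ_{n-1}`, so that `y(x+1) = (1 - r x) y x`. Dividing the terminating condition
`s_n λ_{n-1} = s_{n-1} λ_n` by `λ_{n-1}(x) λ_{n-1}(x+1)` turns it into the discrete Riccati equation
`r(x+1) + s₀(x) = r(x) (1 + λ₀(x) + r(x+1))`, which is exactly what makes `y` solve
`Δ²y = λ₀ Δy + s₀ y`.
-/

noncomputable def daimRatio (l0 s0 : ℤ → ℝ) (m : ℕ) : ℤ → ℝ :=
  fun x => (daim l0 s0 m).2 x / (daim l0 s0 m).1 x

theorem daimRatio_riccati (l0 s0 : ℤ → ℝ) (m : ℕ) (x : ℤ)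
    (hx : (daim l0 s0 m).1 x ≠ 0) (hx₁ : (daim l0 s0 m).1 (x + 1) ≠ 0)
    (hterm : (daim l0 s0 (m + 1)).2 x * (daim l0 s0 m).1 x
      = (daim l0 s0 m).2 x * (daim l0 s0 (m + 1)).1 x) :
    daimRatio l0 s0 m (x + 1) + s0 x
      = daimRatio l0 s0 m x * (1 + l0 x + daimRatio l0 s0 m (x + 1)) := by
  simp only [daim, fd] at hterm
  simp only [daimRatio]
  field_simp
  linear_combination hterm

theorem fd_fd_eq_of_riccati (l0 s0 r y : ℤ → ℝ) (x : ℤ)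
    (hy₀ : y (x + 1) = y x * (1 - r x)) (hy₁ : y (x + 1 + 1) = y (x + 1) * (1 - r (x + 1)))
    (hric : r (x + 1) + s0 x = r x * (1 + l0 x + r (x + 1))) :
    fd (fd y) x = l0 x * fd y x + s0 x * y x := by
  simp only [fd, hy₁, hy₀]
  linear_combination (-y x) * hric

theorem prod_Ico_add_one_right {M : Type*} [CommMonoid M] (f : ℤ → M) {a b : ℤ} (hab : a ≤ b) :
    ∏ i ∈ Finset.Ico a (b + 1), f i = (∏ i ∈ Finset.Ico a b, f i) * f b := by
  rw [← Finset.insert_Ico_right_eq_Ico_add_one hab, Finset.prod_insert Finset.right_notMem_Ico,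
    mul_comm]

theorem stmt_2_general (l0 s0 : ℤ → ℝ) (n : ℕ) (hn : 1 ≤ n) (x0 : ℤ)
    (hl1 : ∀ x : ℤ, (daim l0 s0 (n - 1)).1 x ≠ 0)
    (hterm : ∀ x : ℤ,
      (daim l0 s0 n).2 x * (daim l0 s0 (n - 1)).1 x
        = (daim l0 s0 (n - 1)).2 x * (daim l0 s0 n).1 x)
    (y : ℤ → ℝ)
    (hy : ∀ x : ℤ, x0 ≤ x →
      y x = ∏ i ∈ Finset.Ico x0 x,
        (1 - (daim l0 s0 (n - 1)).2 i / (daim l0 s0 (n - 1)).1 i)) :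
    ∀ x : ℤ, x0 ≤ x → fd (fd y) x = l0 x * fd y x + s0 x * y x := by
  obtain ⟨m, rfl⟩ : ∃ m, n = m + 1 := ⟨n - 1, by omega⟩
  simp only [Nat.add_sub_cancel] at hl1 hterm hy
  have hstep : ∀ x, x0 ≤ x →
      y (x + 1) = y x * (1 - daimRatio l0 s0 m x) := fun x hx => by
    rw [hy x hx, hy (x + 1) (by omega), prod_Ico_add_one_right _ hx, daimRatio]
  intro x hx
  exact fd_fd_eq_of_riccati l0 s0 _ y x (hstep x hx) (hstep (x + 1) (by omega))
    (daimRatio_riccati l0 s0 m x (hl1 x) (hl1 (x + 1)) (hterm x))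

theorem stmt_2 (l0 s0 : ℤ → ℝ) (n : ℕ) (hn : 1 ≤ n) (x0 : ℤ)
    (hl1 : ∀ x : ℤ, (daim l0 s0 (n - 1)).1 x ≠ 0)
    (hl2 : ∀ x : ℤ, (daim l0 s0 n).1 x ≠ 0)
    (hterm : ∀ x : ℤ,
      (daim l0 s0 n).2 x * (daim l0 s0 (n - 1)).1 x
        = (daim l0 s0 (n - 1)).2 x * (daim l0 s0 n).1 x)
    (y : ℤ → ℝ)
    (hy : ∀ x : ℤ, x0 ≤ x →
      y x = ∏ i ∈ Finset.Ico x0 x,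
        (1 - (daim l0 s0 (n - 1)).2 i / (daim l0 s0 (n - 1)).1 i)) :
    ∀ x : ℤ, x0 ≤ x → fd (fd y) x = l0 x * fd y x + s0 x * y x :=
  stmt_2_general l0 s0 n hn x0 hl1 hterm y hy
end

section
/- Let λ₀, s₀ : ℤ → ℝ, let y : ℤ → ℝ satisfy (Δ²y)(x) = λ₀(x)(Δy)(x) + s₀(x)y(x) for all x ∈ ℤ, and fix n ≥ 1. Assume λ_{n−1}(x) ≠ 0 for all x ∈ ℤ and that the terminating condition δ_n(x) = 0 holds for all x ∈ ℤ. Then for every integer x ≥ 0, (Δ^{n+1}y)(x) = (Δ^{n+1}y)(0) · ∏_{k=0}^{x−1} (1 + λ_n(k)/λ_{n−1}(k)). -/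
/-- `δ_n(x) = λ_n(x) s_{n-1}(x) - λ_{n-1}(x) s_n(x)` (for `n ≥ 1`). -/
noncomputable def deltaDAIM (l0 s0 : ℤ → ℝ) (n : ℕ) (x : ℤ) : ℝ :=
  (daim l0 s0 n).1 x * (daim l0 s0 (n - 1)).2 x
    - (daim l0 s0 (n - 1)).1 x * (daim l0 s0 n).2 x

lemma daim_key (l0 s0 : ℤ → ℝ) (y : ℤ → ℝ)
    (hy : ∀ x : ℤ, fd (fd y) x = l0 x * fd y x + s0 x * y x) :
    ∀ n : ℕ, ∀ x : ℤ, fd^[n + 2] y x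
      = (daim l0 s0 n).1 x * fd y x + (daim l0 s0 n).2 x * y x := by
  intro n
  induction n with
  | zero =>
    intro x
    simpa [daim] using hy x
  | succ m ih =>
    intro x
    have h1 : fd^[m + 2 + 1] y x = fd^[m + 2] y (x + 1) - fd^[m + 2] y x := by
      rw [Function.iterate_succ_apply']
      rfl
    have hfy : fd y (x + 1) = fd y x + (l0 x * fd y x + s0 x * y x) := by
      have := hy x
      simp only [fd] at this ⊢
      linarith
    have hyy : y (x + 1) = y x + fd y x := by
      simp [fd]
    rw [h1, ih x, ih (x + 1), hfy, hyy]
    simp only [daim, fd]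
    ring

theorem stmt_3 (l0 s0 : ℤ → ℝ) (y : ℤ → ℝ)
    (hy : ∀ x : ℤ, fd (fd y) x = l0 x * fd y x + s0 x * y x)
    (n : ℕ) (hn : 1 ≤ n)
    (hl : ∀ x : ℤ, (daim l0 s0 (n - 1)).1 x ≠ 0)
    (hδ : ∀ x : ℤ, deltaDAIM l0 s0 n x = 0) :
    ∀ x : ℤ, 0 ≤ x →
      fd^[n + 1] y x
        = fd^[n + 1] y 0 *
            ∏ k ∈ Finset.Ico (0 : ℤ) x,
              (1 + (daim l0 s0 n).1 k / (daim l0 s0 (n - 1)).1 k) := by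
  obtain ⟨m, rfl⟩ : ∃ m, n = m + 1 := ⟨n - 1, (Nat.succ_pred_eq_of_pos hn).symm⟩
  simp only [Nat.add_sub_cancel] at hl hδ ⊢
  have key := daim_key l0 s0 y hy
  -- step: F(x+1) = (1 + λ_n/λ_m) F(x)
  have step : ∀ x : ℤ, fd^[m + 1 + 1] y (x + 1)
      = (1 + (daim l0 s0 (m + 1)).1 x / (daim l0 s0 m).1 x) * fd^[m + 1 + 1] y x := by
    intro x
    have h1 : fd^[m + 1 + 2] y x = fd^[m + 1 + 1] y (x + 1) - fd^[m + 1 + 1] y x := by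
      rw [show m + 1 + 2 = (m + 1 + 1) + 1 from rfl, Function.iterate_succ_apply']
      rfl
    have h2 := key (m + 1) x
    have h3 := key m x
    have hδx := hδ x
    simp only [deltaDAIM, Nat.add_sub_cancel] at hδx
    have hlx := hl x
    rw [show m + 1 + 1 = m + 2 from rfl] at *
    rw [h1] at h2
    have hq : (daim l0 s0 (m + 1)).1 x / (daim l0 s0 m).1 x * fd^[m + 2] y x
        = (daim l0 s0 (m + 1)).1 x * fd y x + (daim l0 s0 (m + 1)).2 x * y x := by
      rw [h3, div_mul_eq_mul_div, eq_comm, eq_div_iff hlx]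
      linear_combination (-(y x)) * hδx
    calc fd^[m + 2] y (x + 1)
        = fd^[m + 2] y x + (fd^[m + 2] y (x + 1) - fd^[m + 2] y x) := by ring
      _ = fd^[m + 2] y x
          + ((daim l0 s0 (m + 1)).1 x * fd y x + (daim l0 s0 (m + 1)).2 x * y x) := by
          rw [h2]
      _ = fd^[m + 2] y x
          + (daim l0 s0 (m + 1)).1 x / (daim l0 s0 m).1 x * fd^[m + 2] y x := by
          rw [hq]
      _ = (1 + (daim l0 s0 (m + 1)).1 x / (daim l0 s0 m).1 x) * fd^[m + 2] y x := by ring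
  refine Int.le_induction ?_ ?_
  · simp
  · intro x hx0 ih
    have hins : Finset.Ico (0 : ℤ) (x + 1) = insert x (Finset.Ico 0 x) := by
      ext k
      simp only [Finset.mem_Ico, Finset.mem_insert]
      omega
    rw [step x, ih, hins, Finset.prod_insert (by simp)]
    ring
end

section
/- Let λ₀, s₀ : ℤ → ℝ, fix n ≥ 1 and an integer x₀. Assume λ_{n−1}(x), λ_n(x), s_{n−1}(x), s_n(x) are all nonzero for every x ∈ ℤ, and assume the terminating condition s_n(x)λ_{n−1}(x) = s_{n−1}(x)λ_n(x) holds for all x ∈ ℤ. Define y on integers x ≥ x₀ by y(x) = ∏_{i=x₀}^{x−1} (1 − s_{n−1}(i)/λ_{n−1}(i)). Then (Δ^{n+1}y)(x) = 0 for every integer x ≥ x₀; that is, y agrees on {x ∈ ℤ : x ≥ x₀} with a polynomial of degree at most n. -/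
/-! With `l = λ_{n-1}` and `s = s_{n-1}`, the product `y` solves the first-order equation
`Δy = -(s/l) y`. The terminating condition turns this into the second-order equation
`Δ²y = λ₀ Δy + s₀ y`, and iterating the latter gives `Δ^{k+2}y = λ_k Δy + s_k y` (the DAIM
recursion is exactly what this iteration produces). At `k = n - 1` the right side is
`-s y + s y = 0`, and a function whose `(n+1)`-st forward difference vanishes on a half-line
is given there by Newton's forward-difference formula, a polynomial of degree `≤ n`. -/

open Finset Polynomial

section Newton

variable {G : Type*} [AddCommGroup G]

lemma fwdDiff_iter_eq_zero_of_eqOn_Ici {g : ℤ → G} {x0 : ℤ} (hg : ∀ x, x0 ≤ x → g x = 0)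
    (k : ℕ) {x : ℤ} (hx : x0 ≤ x) : (fwdDiff 1)^[k] g x = 0 := by
  induction k generalizing x with
  | zero => exact hg x hx
  | succ k ih =>
    rw [Function.iterate_succ_apply', fwdDiff, ih hx, ih (by omega), sub_zero]

lemma eq_sum_range_choose_smul_fwdDiff_iter {f : ℤ → G} {x0 : ℤ} {N : ℕ}
    (hf : ∀ x, x0 ≤ x → (fwdDiff 1)^[N + 1] f x = 0) (t : ℕ) :
    f (x0 + t) = ∑ k ∈ range (N + 1), t.choose k • (fwdDiff 1)^[k] f x0 := by
  have hhigh : ∀ k, N + 1 ≤ k → (fwdDiff 1)^[k] f x0 = 0 := by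
    intro k hk
    obtain ⟨j, rfl⟩ := Nat.exists_eq_add_of_le' hk
    rw [Function.iterate_add_apply]
    exact fwdDiff_iter_eq_zero_of_eqOn_Ici hf j le_rfl
  have := shift_eq_sum_fwdDiff_iter (1 : ℤ) f t x0
  rw [nsmul_one] at this
  rw [this]
  rcases le_total (t + 1) (N + 1) with h | h
  · refine sum_subset (range_subset_range.mpr h) fun k _ hk => ?_
    rw [Nat.choose_eq_zero_of_lt (by simpa using hk), zero_smul]
  · refine (sum_subset (range_subset_range.mpr h) fun k _ hk => ?_).symm
    rw [hhigh k (by simpa using hk), smul_zero]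

end Newton

theorem exists_polynomial_eq_of_fwdDiff_iter_eq_zero {K : Type*} [Field K] [CharZero K]
    {f : ℤ → K} {x0 : ℤ} {N : ℕ}
    (hf : ∀ x, x0 ≤ x → (fwdDiff 1)^[N + 1] f x = 0) :
    ∃ P : K[X], P.natDegree ≤ N ∧ ∀ x, x0 ≤ x → f x = P.eval (x : K) := by
  -- Newton's interpolation polynomial `∑ₖ Δᵏf(x0) · (x - x0).choose k`.
  refine ⟨∑ k ∈ range (N + 1),
    C ((fwdDiff 1)^[k] f x0 / k.factorial) * (descPochhammer K k).comp (X - C (x0 : K)), ?_, ?_⟩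
  · refine natDegree_sum_le_of_forall_le _ _ fun k hk => (natDegree_C_mul_le _ _).trans ?_
    rw [natDegree_comp, descPochhammer_natDegree, natDegree_X_sub_C, mul_one]
    exact Nat.lt_succ_iff.mp (mem_range.mp hk)
  · intro x hx
    obtain ⟨t, rfl⟩ : ∃ t : ℕ, x = x0 + t := ⟨(x - x0).toNat, by omega⟩
    rw [eq_sum_range_choose_smul_fwdDiff_iter hf t, eval_finsetSum]
    refine sum_congr rfl fun k _ => ?_
    have hx : ((x0 + t : ℤ) : K) - x0 = (t : K) := by push_cast; ring
    rw [eval_mul, eval_C, eval_comp, eval_sub, eval_X, eval_C, hx,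
      descPochhammer_eval_eq_descFactorial, Nat.descFactorial_eq_factorial_mul_choose, nsmul_eq_mul]
    have : (k.factorial : K) ≠ 0 := Nat.cast_ne_zero.mpr k.factorial_ne_zero
    push_cast
    field_simp

lemma fd_eq_sub_one_mul_of_eq_prod_Ico {y g : ℤ → ℝ} {x0 : ℤ}
    (hy : ∀ x, x0 ≤ x → y x = ∏ i ∈ Ico x0 x, g i) {x : ℤ} (hx : x0 ≤ x) :
    fd y x = (g x - 1) * y x := by
  rw [fd, hy x hx, hy (x + 1) (by omega), ← insert_Ico_right_eq_Ico_add_one hx,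
    prod_insert right_notMem_Ico]
  ring

section Daim

variable {l0 s0 y : ℤ → ℝ} {x0 : ℤ}

lemma fd_iter_add_two_eq_daim (hy : ∀ x, x0 ≤ x → fd (fd y) x = l0 x * fd y x + s0 x * y x)
    (k : ℕ) {x : ℤ} (hx : x0 ≤ x) :
    fd^[k + 2] y x = (daim l0 s0 k).1 x * fd y x + (daim l0 s0 k).2 x * y x := by
  induction k generalizing x with
  | zero => exact hy x hx
  | succ k ih =>
    have hfd_succ : fd y (x + 1) = fd y x + (l0 x * fd y x + s0 x * y x) := by
      rw [← hy x hx]; simp only [fd]; ring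
    have hy_succ : y (x + 1) = y x + fd y x := by rw [fd]; ring
    rw [Function.iterate_succ_apply', fd, ih hx, ih (by omega), hfd_succ, hy_succ]
    simp only [daim, fd]
    ring

lemma fd_fd_eq_of_daim_terminating {k : ℕ} (hl : ∀ x, (daim l0 s0 k).1 x ≠ 0)
    (hterm : ∀ x, (daim l0 s0 (k + 1)).2 x * (daim l0 s0 k).1 x
      = (daim l0 s0 k).2 x * (daim l0 s0 (k + 1)).1 x)
    (hy : ∀ x, x0 ≤ x → fd y x = -((daim l0 s0 k).2 x / (daim l0 s0 k).1 x) * y x)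
    {x : ℤ} (hx : x0 ≤ x) :
    fd (fd y) x = l0 x * fd y x + s0 x * y x := by
  set l := (daim l0 s0 k).1
  set s := (daim l0 s0 k).2
  -- The terminating condition is a Riccati equation for the ratio `s / l`.
  have hratio : s (x + 1) / l (x + 1) * (1 - s x / l x) = s x / l x * (1 + l0 x) - s0 x := by
    have := hterm x
    simp only [daim, fd] at this
    field_simp [hl x, hl (x + 1)]
    linear_combination this
  have hy_succ : y (x + 1) = (1 - s x / l x) * y x := by
    linear_combination (show fd y x = y (x + 1) - y x from rfl).symm + hy x hx
  rw [fd, hy (x + 1) (by omega), hy x hx, hy_succ]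
  linear_combination (-(y x)) * hratio

end Daim

theorem stmt_6_general (l0 s0 : ℤ → ℝ) (n : ℕ) (hn : 1 ≤ n) (x0 : ℤ)
    (hl1 : ∀ x : ℤ, (daim l0 s0 (n - 1)).1 x ≠ 0)
    (hterm : ∀ x : ℤ,
      (daim l0 s0 n).2 x * (daim l0 s0 (n - 1)).1 x
        = (daim l0 s0 (n - 1)).2 x * (daim l0 s0 n).1 x)
    (y : ℤ → ℝ)
    (hy : ∀ x : ℤ, x0 ≤ x →
      y x = ∏ i ∈ Finset.Ico x0 x,
        (1 - (daim l0 s0 (n - 1)).2 i / (daim l0 s0 (n - 1)).1 i)) :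
    (∀ x : ℤ, x0 ≤ x → fd^[n + 1] y x = 0) ∧
      ∃ P : Polynomial ℝ, P.natDegree ≤ n ∧ ∀ x : ℤ, x0 ≤ x → y x = P.eval (x : ℝ) := by
  obtain ⟨m, rfl⟩ : ∃ m, n = m + 1 := ⟨n - 1, by omega⟩
  simp only [Nat.add_sub_cancel] at hl1 hterm hy
  have hfirst (x : ℤ) (hx : x0 ≤ x) :
      fd y x = -((daim l0 s0 m).2 x / (daim l0 s0 m).1 x) * y x := by
    rw [fd_eq_sub_one_mul_of_eq_prod_Ico hy hx]
    ring
  have hvanish (x : ℤ) (hx : x0 ≤ x) : fd^[m + 2] y x = 0 := by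
    rw [fd_iter_add_two_eq_daim (fun _ => fd_fd_eq_of_daim_terminating hl1 hterm hfirst) m hx,
      hfirst x hx]
    field_simp [hl1 x]
    ring
  -- `fd` is `fwdDiff 1` by definition.
  exact ⟨hvanish, exists_polynomial_eq_of_fwdDiff_iter_eq_zero hvanish⟩

theorem stmt_6 (l0 s0 : ℤ → ℝ) (n : ℕ) (hn : 1 ≤ n) (x0 : ℤ)
    (hl1 : ∀ x : ℤ, (daim l0 s0 (n - 1)).1 x ≠ 0)
    (hl2 : ∀ x : ℤ, (daim l0 s0 n).1 x ≠ 0)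
    (hs1 : ∀ x : ℤ, (daim l0 s0 (n - 1)).2 x ≠ 0)
    (hs2 : ∀ x : ℤ, (daim l0 s0 n).2 x ≠ 0)
    (hterm : ∀ x : ℤ,
      (daim l0 s0 n).2 x * (daim l0 s0 (n - 1)).1 x
        = (daim l0 s0 (n - 1)).2 x * (daim l0 s0 n).1 x)
    (y : ℤ → ℝ)
    (hy : ∀ x : ℤ, x0 ≤ x →
      y x = ∏ i ∈ Finset.Ico x0 x,
        (1 - (daim l0 s0 (n - 1)).2 i / (daim l0 s0 (n - 1)).1 i)) :
    (∀ x : ℤ, x0 ≤ x → fd^[n + 1] y x = 0) ∧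
      ∃ P : Polynomial ℝ, P.natDegree ≤ n ∧ ∀ x : ℤ, x0 ≤ x → y x = P.eval (x : ℝ) :=
  stmt_6_general l0 s0 n hn x0 hl1 hterm y hy
end
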